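/- arXiv:1701.00948 — 4 statements merged into one kernel-verified Lean document; each statement's English description precedes it below -/
import Mathlib

section
/- Every factor of a Sturmian word of even length whose number of occurrences of the letter a is even is an abelian square. -/
/-- `u` is a factor of the infinite word `s`. -/
def FactorOf {A : Type*} (u : List A) (s : ℕ → A) : Prop :=
  ∃ i : ℕ, u = (List.range u.length).map fun k => s (i + k)

/-- An infinite binary word is balanced if any two factors of the same length
have numbers of occurrences of `true` differing by at most 1. -/
def BalancedSeq (s : ℕ → Bool) : Prop :=
  ∀ u v : List Bool, FactorOf u s → FactorOf v s → u.length = v.length →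
    (u.count true : ℤ) - (v.count true : ℤ) ≤ 1

/-- An infinite word is eventually periodic if some positive period works from
some point on. -/
def EventuallyPeriodic (s : ℕ → Bool) : Prop :=
  ∃ p : ℕ, 0 < p ∧ ∃ N : ℕ, ∀ n ≥ N, s (n + p) = s n

/-- An abelian square: a word `u ++ v` with `|u| = |v|` and equal Parikh
vectors. -/
def IsAbelianSquare (w : List Bool) : Prop :=
  ∃ u v : List Bool, w = u ++ v ∧ u.length = v.length ∧
    ∀ c, u.count c = v.count c

/-- A "window" of `s` is a factor of `s`. -/
lemma window_factorOf (s : ℕ → Bool) (i n : ℕ) :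
    FactorOf ((List.range n).map fun k => s (i + k)) s := by
  refine ⟨i, ?_⟩
  simp

lemma count_false_eq (w : List Bool) :
    w.count false = w.length - w.count true := by
  have := List.count_true_add_count_false w
  omega

/-- Every factor of a Sturmian word (an aperiodic balanced infinite binary
word, with `a = true`) of even length with an even number of `a`'s is an
abelian square. -/
theorem stmt4 (s : ℕ → Bool) (hbal : BalancedSeq s)
    (hap : ¬ EventuallyPeriodic s) (u : List Bool) (hu : FactorOf u s)
    (hlen : Even u.length) (hcount : Even (u.count true)) :
    IsAbelianSquare u := by
  obtain ⟨i, hi⟩ := hu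
  obtain ⟨n, hn⟩ := hlen
  set x : List Bool := (List.range n).map fun k => s (i + k) with hx
  set y : List Bool := (List.range n).map fun k => s ((i + n) + k) with hy
  have hxl : x.length = n := by simp [hx]
  have hyl : y.length = n := by simp [hy]
  have huxy : u = x ++ y := by
    rw [hi, hn, show n + n = n + n from rfl, List.range_add, List.map_append,
      List.map_map]
    congr 1
    apply List.map_congr_left
    intro k _
    simp [Function.comp]
    ring_nf
  have hxf : FactorOf x s := by rw [hx]; exact window_factorOf s i n
  have hyf : FactorOf y s := by rw [hy]; exact window_factorOf s (i + n) n
  have h1 := hbal x y hxf hyf (by rw [hxl, hyl])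
  have h2 := hbal y x hyf hxf (by rw [hxl, hyl])
  have hsum : x.count true + y.count true = u.count true := by
    rw [huxy, List.count_append]
  obtain ⟨m, hm⟩ := hcount
  have heq : x.count true = y.count true := by omega
  refine ⟨x, y, huxy, by rw [hxl, hyl], ?_⟩
  intro c
  cases c
  · rw [count_false_eq, count_false_eq, hxl, hyl, heq]
  · exact heq
end

section
/- Let t be the Thue-Morse word, i.e., t(n) is the parity of the number of 1's in the binary expansion of n. If u is a factor of t of length n ≥ 2 that begins and ends with the same letter, then μ²(u) is an abelian-square factor of t of length 4n beginning and ending with the same letter, and the word obtained from μ²(u) by removing its first and last letters is an abelian-square factor of t of length 4n − 2. -/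
/-- The Thue-Morse word: `tm n` is the parity of the number of `1`'s in the
binary expansion of `n` (`true` = `1`, `false` = `0`). -/
def tm (n : ℕ) : Bool := (Nat.digits 2 n).sum % 2 == 1

/-- The Thue-Morse morphism `μ : 0 ↦ 01, 1 ↦ 10`. -/
def mu (w : List Bool) : List Bool := w.flatMap fun b => [b, !b]

/-!
`t(2n) = t(n)` and `t(2n+1) = ¬t(n)`, so `μ` sends the factor of `t` at position `i` to the
factor at position `2i`. The image under `μ` of a word `x` contains `|x|` letters of each kind,
so `μ` of a word of even length is an abelian square with halves `μ(x₁)`, `μ(x₂)`. Since `μ²`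
keeps the first and last letters of `u`, removing them takes the same letter off both halves.
-/

section FactorOf

variable {α : Type*} {u v : List α} {s : ℕ → α}

theorem factorOf_iff_getElem :
    FactorOf u s ↔ ∃ i, ∀ k (hk : k < u.length), u[k] = s (i + k) := by
  simp [FactorOf, List.ext_getElem_iff]

theorem FactorOf.of_isInfix (hv : FactorOf v s) (huv : u <:+: v) : FactorOf u s := by
  obtain ⟨i, hi⟩ := factorOf_iff_getElem.mp hv
  obtain ⟨j, hj, huv⟩ := List.infix_iff_getElem?.mp huv
  refine factorOf_iff_getElem.mpr ⟨i + j, fun k hk => ?_⟩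
  have := huv k hk
  rw [List.getElem?_eq_getElem (by omega), Option.some_inj, hi] at this
  rw [← this]; ring_nf

end FactorOf

theorem List.tail_dropLast_isInfix {α : Type*} (l : List α) : l.tail.dropLast <:+: l :=
  (List.dropLast_prefix _).isInfix.trans (List.tail_suffix l).isInfix

@[simp] theorem mu_nil : mu [] = [] := rfl

@[simp] theorem mu_cons (a : Bool) (w : List Bool) : mu (a :: w) = a :: (!a) :: mu w := rfl

@[simp] theorem mu_append (v w : List Bool) : mu (v ++ w) = mu v ++ mu w :=
  List.flatMap_append

@[simp] theorem length_mu (w : List Bool) : (mu w).length = 2 * w.length := by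
  induction w with
  | nil => rfl
  | cons a w ih => simp [ih]; ring

theorem count_mu (w : List Bool) (c : Bool) : (mu w).count c = w.length := by
  induction w with
  | nil => rfl
  | cons a w ih => cases a <;> cases c <;> simp [ih]

@[simp] theorem head?_mu (w : List Bool) : (mu w).head? = w.head? := by
  cases w <;> rfl

@[simp] theorem getLast?_mu (w : List Bool) : (mu w).getLast? = w.getLast?.map (!·) := by
  induction w using List.reverseRecOn with
  | nil => rfl
  | append_singleton w a _ => simp

theorem isAbelianSquare_mu {w : List Bool} (hw : Even w.length) : IsAbelianSquare (mu w) := by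
  obtain ⟨m, hm⟩ := hw
  refine ⟨mu (w.take m), mu (w.drop m), by rw [← mu_append, List.take_append_drop], ?_,
    fun c => ?_⟩
  · simp; omega
  · simp only [count_mu, List.length_take, List.length_drop]; omega

theorem IsAbelianSquare.tail_dropLast {w : List Bool} (hw : IsAbelianSquare w)
    (hends : w.head? = w.getLast?) : IsAbelianSquare w.tail.dropLast := by
  obtain ⟨u, v, rfl, hlen, hcount⟩ := hw
  rcases u with _ | ⟨a, u⟩
  · obtain rfl : v = [] := List.eq_nil_of_length_eq_zero hlen.symm
    exact ⟨[], [], rfl, rfl, fun _ => rfl⟩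
  rcases v.eq_nil_or_concat' with rfl | ⟨v, b, rfl⟩
  · simp at hlen
  rw [← List.append_assoc, List.getLast?_concat, List.cons_append, List.cons_append,
    List.head?_cons, Option.some_inj] at hends
  subst hends
  refine ⟨u, v, by simp, by simpa using hlen, fun c => ?_⟩
  have := hcount c
  simp only [List.count_cons, List.count_append, List.count_nil] at this
  omega

theorem tm_two_mul (n : ℕ) : tm (2 * n) = tm n := by
  rcases Nat.eq_zero_or_pos n with rfl | hn
  · rfl
  · simp [tm, Nat.digits_def' one_lt_two (by omega : 0 < 2 * n)]

theorem tm_two_mul_add_one (n : ℕ) : tm (2 * n + 1) = !tm n := by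
  rw [tm, Nat.digits_def' one_lt_two (by omega), Nat.mul_add_div two_pos, Nat.mul_add_mod]
  rcases Nat.mod_two_eq_zero_or_one (Nat.digits 2 n).sum with h | h <;>
    simp [tm, Nat.add_mod, h]

theorem mu_map_range_tm (i L : ℕ) :
    mu ((List.range L).map fun k => tm (i + k)) =
      (List.range (2 * L)).map fun k => tm (2 * i + k) := by
  induction L with
  | zero => rfl
  | succ L ih =>
    have h₀ : tm (2 * i + 2 * L) = tm (i + L) := by rw [← mul_add, tm_two_mul]
    have h₁ : tm (2 * i + (2 * L + 1)) = !tm (i + L) := by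
      rw [← add_assoc, ← mul_add, tm_two_mul_add_one]
    simp [List.range_succ, ih, mul_add, h₀, h₁]

theorem FactorOf.mu {u : List Bool} (hu : FactorOf u tm) : FactorOf (mu u) tm := by
  obtain ⟨i, hi⟩ := hu
  refine ⟨2 * i, ?_⟩
  rw [length_mu, ← mu_map_range_tm, ← hi]

theorem stmt7_general (u : List Bool) (n : ℕ) (hlen : u.length = n)
    (hu : FactorOf u tm) (c : Bool) (hh : u.head? = some c)
    (hl : u.getLast? = some c) :
    (FactorOf (mu (mu u)) tm ∧ IsAbelianSquare (mu (mu u)) ∧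
      (mu (mu u)).length = 4 * n ∧
      ∃ d : Bool, (mu (mu u)).head? = some d ∧ (mu (mu u)).getLast? = some d) ∧
    (FactorOf (mu (mu u)).tail.dropLast tm ∧
      IsAbelianSquare (mu (mu u)).tail.dropLast ∧
      (mu (mu u)).tail.dropLast.length = 4 * n - 2) := by
  have hfactor : FactorOf (mu (mu u)) tm := hu.mu.mu
  have hsquare : IsAbelianSquare (mu (mu u)) := isAbelianSquare_mu (by simp)
  have hlength : (mu (mu u)).length = 4 * n := by simp [hlen]; ring
  have hhead : (mu (mu u)).head? = some c := by simp [hh]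
  have hlast : (mu (mu u)).getLast? = some c := by simp [hl]
  refine ⟨⟨hfactor, hsquare, hlength, c, hhead, hlast⟩,
    hfactor.of_isInfix (List.tail_dropLast_isInfix _),
    hsquare.tail_dropLast (hhead.trans hlast.symm), ?_⟩
  simp only [List.length_dropLast, List.length_tail, hlength]
  omega

/-- If `u` is a factor of the Thue-Morse word of length `n ≥ 2` beginning and
ending with the same letter, then `μ²(u)` is an abelian-square factor of `tm`
of length `4n` beginning and ending with the same letter, and removing the
first and last letters of `μ²(u)` gives an abelian-square factor of `tm` of
length `4n − 2`. -/
theorem stmt7 (u : List Bool) (n : ℕ) (hn : 2 ≤ n) (hlen : u.length = n)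
    (hu : FactorOf u tm) (c : Bool) (hh : u.head? = some c)
    (hl : u.getLast? = some c) :
    (FactorOf (mu (mu u)) tm ∧ IsAbelianSquare (mu (mu u)) ∧
      (mu (mu u)).length = 4 * n ∧
      ∃ d : Bool, (mu (mu u)).head? = some d ∧ (mu (mu u)).getLast? = some d) ∧
    (FactorOf (mu (mu u)).tail.dropLast tm ∧
      IsAbelianSquare (mu (mu u)).tail.dropLast ∧
      (mu (mu u)).tail.dropLast.length = 4 * n - 2) :=
  stmt7_general u n hlen hu c hh hl
end

section
/- Let s_α be a Sturmian word of angle α (irrational, 0 < α < 1), and let n be a positive even integer. A factor t of s_α of length n is an abelian square if and only if: t is light (Parikh vector (⌊nα⌋, n − ⌊nα⌋)) when ⌊nα⌋ is even, or t is heavy (Parikh vector (⌈nα⌉, n − ⌈nα⌉)) when ⌊nα⌋ is odd. -/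
open scoped Classical

/-- The Sturmian word of angle `α` and initial point `ρ`, with `a = true`:
position `n` is `a` iff `{ρ + nα} ∈ [1−α, 1)`. -/
noncomputable def sturmian (α ρ : ℝ) (n : ℕ) : Bool :=
  if 1 - α ≤ Int.fract (ρ + n * α) then true else false

/-! The coding `s_{α,ρ}` is the mechanical word `⌊ρ + (k+1)α⌋ - ⌊ρ + kα⌋`, so a
factor of length `L` has `⌊y + Lα⌋ - ⌊y⌋ ∈ {⌊Lα⌋, ⌊Lα⌋ + 1}` letters `a`. Splitting a factor of
length `n = 2m` into halves `u v`, both halves are factors of length `m`, so their numbers of `a`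
differ by at most one; hence `u` and `v` have the same Parikh vector iff the total number of `a`
is even. Since `nα` is irrational, `⌈nα⌉ = ⌊nα⌋ + 1`, and of the two possible counts exactly the
even one gives abelian squares. -/

lemma FactorOf.take {A : Type*} {u : List A} {s : ℕ → A} (h : FactorOf u s) (m : ℕ) :
    FactorOf (u.take m) s := by
  obtain ⟨i, hi⟩ := h
  rw [hi]
  exact ⟨i, List.ext_getElem (by simp) fun k _ _ => by simp⟩

lemma FactorOf.drop {A : Type*} {u : List A} {s : ℕ → A} (h : FactorOf u s) (m : ℕ) :
    FactorOf (u.drop m) s := by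
  obtain ⟨i, hi⟩ := h
  rw [hi]
  exact ⟨i + m, List.ext_getElem (by simp) fun k _ _ => by simp [Nat.add_assoc]⟩

lemma floor_add_sub_floor {α : ℝ} (h0 : 0 ≤ α) (h1 : α < 1) (x : ℝ) :
    ⌊x + α⌋ - ⌊x⌋ = if 1 - α ≤ Int.fract x then 1 else 0 := by
  have hx : x + α = (Int.fract x + α) + ⌊x⌋ := by rw [Int.fract]; ring
  have hf0 := Int.fract_nonneg x
  have hf1 := Int.fract_lt_one x
  rw [hx, Int.floor_add_intCast, add_sub_cancel_right, Int.floor_eq_iff]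
  split_ifs <;> push_cast <;> constructor <;> linarith

lemma isAbelianSquare_append_iff {u v : List Bool} (hlen : u.length = v.length) :
    IsAbelianSquare (u ++ v) ↔ u.count true = v.count true := by
  constructor
  · rintro ⟨u', v', huv, hlen', hc⟩
    have hu' : u'.length = u.length := by
      have := congrArg List.length huv
      simp only [List.length_append] at this
      omega
    obtain ⟨rfl, rfl⟩ := List.append_inj huv hu'.symm
    exact hc true
  · intro h
    refine ⟨u, v, rfl, hlen, fun c => ?_⟩
    cases c
    · have hu := List.count_false_add_count_true u
      have hv := List.count_false_add_count_true v
      omega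
    · exact h

lemma isAbelianSquare_append_iff_even {u v : List Bool} (hlen : u.length = v.length)
    (hbal : u.count true ≤ v.count true + 1 ∧ v.count true ≤ u.count true + 1) :
    IsAbelianSquare (u ++ v) ↔ Even ((u ++ v).count true) := by
  rw [isAbelianSquare_append_iff hlen, List.count_append, Nat.even_iff]
  omega

section Sturmian

variable {α : ℝ} (ρ : ℝ)

lemma sturmian_toNat (h0 : 0 ≤ α) (h1 : α < 1) (k : ℕ) :
    ((sturmian α ρ k).toNat : ℤ) = ⌊ρ + (k + 1 : ℕ) * α⌋ - ⌊ρ + k * α⌋ := by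
  rw [show ρ + (k + 1 : ℕ) * α = ρ + k * α + α by push_cast; ring,
    floor_add_sub_floor h0 h1, sturmian]
  split_ifs <;> rfl

lemma count_true_sturmian_factor (h0 : 0 ≤ α) (h1 : α < 1) (i L : ℕ) :
    ((((List.range L).map fun k => sturmian α ρ (i + k)).count true : ℕ) : ℤ)
      = ⌊ρ + (i + L : ℕ) * α⌋ - ⌊ρ + i * α⌋ := by
  induction L with
  | zero => simp
  | succ L ih =>
    have hlast := sturmian_toNat ρ h0 h1 (i + L)
    rw [List.range_succ, List.map_append, List.count_append, Nat.cast_add, ih]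
    push_cast at hlast ⊢
    rw [← add_assoc]
    cases h : sturmian α ρ (i + L) <;> simp_all

lemma FactorOf.count_true_sturmian_mem (h0 : 0 ≤ α) (h1 : α < 1) {u : List Bool}
    (hu : FactorOf u (sturmian α ρ)) :
    ⌊(u.length : ℝ) * α⌋ ≤ u.count true ∧ (u.count true : ℤ) ≤ ⌊(u.length : ℝ) * α⌋ + 1 := by
  obtain ⟨i, hi⟩ := hu
  have hcount := count_true_sturmian_factor ρ h0 h1 i u.length
  rw [← hi] at hcount
  have hsplit : ρ + (i + u.length : ℕ) * α = (ρ + i * α) + u.length * α := by push_cast; ring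
  rw [hcount, hsplit]
  have := Int.le_floor_add (ρ + i * α) (u.length * α)
  have := Int.le_floor_add_floor (ρ + i * α) (u.length * α)
  constructor <;> linarith

lemma FactorOf.isAbelianSquare_sturmian_iff_even (h0 : 0 ≤ α) (h1 : α < 1)
    {t : List Bool} (ht : FactorOf t (sturmian α ρ)) (hev : Even t.length) :
    IsAbelianSquare t ↔ Even (t.count true) := by
  obtain ⟨m, hm⟩ := hev
  have hhalf : (t.take m).length = m ∧ (t.drop m).length = m := by
    simp only [List.length_take, List.length_drop]; omega
  have hbal_u := (ht.take m).count_true_sturmian_mem ρ h0 h1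
  have hbal_v := (ht.drop m).count_true_sturmian_mem ρ h0 h1
  rw [hhalf.1] at hbal_u
  rw [hhalf.2] at hbal_v
  conv_lhs => rw [← List.take_append_drop m t]
  rw [isAbelianSquare_append_iff_even (hhalf.1.trans hhalf.2.symm) (by omega),
    List.take_append_drop]

end Sturmian

/-- A factor `t` of length `n` (positive and even) of a Sturmian word of angle
`α` is an abelian square iff it is light (has `⌊nα⌋` letters `a`) when `⌊nα⌋`
is even, and iff it is heavy (has `⌈nα⌉` letters `a`) when `⌊nα⌋` is odd. -/
theorem stmt13 (α ρ : ℝ) (hirr : Irrational α) (h0 : 0 < α) (h1 : α < 1)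
    (n : ℕ) (hn : 0 < n) (hev : Even n) (t : List Bool)
    (ht : FactorOf t (sturmian α ρ)) (hlen : t.length = n) :
    (Even ⌊(n : ℝ) * α⌋ →
      (IsAbelianSquare t ↔ (t.count true : ℤ) = ⌊(n : ℝ) * α⌋)) ∧
    (Odd ⌊(n : ℝ) * α⌋ →
      (IsAbelianSquare t ↔ (t.count true : ℤ) = ⌈(n : ℝ) * α⌉)) := by
  have hsquare := ht.isAbelianSquare_sturmian_iff_even ρ h0.le h1 (hlen ▸ hev)
  have hbal := ht.count_true_sturmian_mem ρ h0.le h1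
  rw [hlen] at hbal
  have hceil : ⌈(n : ℝ) * α⌉ = ⌊(n : ℝ) * α⌋ + 1 :=
    (Int.ceil_eq_floor_add_one_iff_notMem _).2
      fun ⟨z, hz⟩ => (hirr.natCast_mul hn.ne').ne_int z hz.symm
  rw [hsquare, hceil, ← Int.even_coe_nat, Int.even_iff, Int.even_iff, Int.odd_iff]
  omega
end

section
/- Let s_α be a Sturmian word of angle α, where α ∈ (0,1) is irrational with bounded partial quotients. Then there exists a constant C > 0 such that for every n, the total number of distinct abelian-square factors of s_α of length at most n is at least C·n². -/
/-!
The number of letters `a` in the factor of length `L` at position `i` is `⌊x + Lα⌋` with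
`x = {ρ + iα}`. So if `{mα} < 1/8` and `x < 3/4`, the factor of length `2m` at `i` is an abelian
square, and the factors of length `2m` at two positions with `x < {-jα} ≤ x'` for some `j ≤ 2m`
differ in their prefixes of length `j`. An irrational rotation visits every interval with bounded
gaps; hence `≫ n` values of `m ∈ (n/4, n/2]` have `{mα} < 1/8`, and for each of them `≫ m` points
`{-jα}` lie in `(0, 3/4)`, the orbit points `{ρ + iα}` between consecutive ones giving `≫ m`
distinct abelian squares of length `2m`.
-/

open scoped Classical

/-- The partial quotients of the simple continued fraction expansion of `α`. -/
noncomputable def cfrac (α : ℝ) : ℕ → ℤ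
  | 0 => ⌊α⌋
  | n + 1 => cfrac (Int.fract α)⁻¹ n

/-- `α` has bounded partial quotients. -/
def BddPartialQuotients (α : ℝ) : Prop := ∃ B : ℤ, ∀ i : ℕ, cfrac α i ≤ B

theorem exists_nat_fract_add_mul_mem_Ioo {a b d : ℝ} (ha : 0 ≤ a) (hb : b ≤ 1) (hd : 0 < d)
    (hdab : d < b - a) (y : ℝ) :
    ∃ k : ℕ, k ≤ ⌊2 / d⌋₊ + 1 ∧ Int.fract (y + k * d) ∈ Set.Ioo a b := by
  have hy0 := Int.fract_nonneg y
  have hy1 := Int.fract_lt_one y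
  set t := (1 + a - Int.fract y) / d
  have ht0 : 0 ≤ t := div_nonneg (by linarith) hd.le
  have hlt : 1 + a < Int.fract y + (⌊t⌋₊ + 1 : ℕ) * d := by
    have := (div_lt_iff₀ hd).1 (Nat.lt_floor_add_one t)
    push_cast
    linarith
  have hle : Int.fract y + (⌊t⌋₊ + 1 : ℕ) * d ≤ 1 + a + d := by
    have := (le_div_iff₀ hd).1 (Nat.floor_le ht0)
    push_cast
    linarith
  refine ⟨⌊t⌋₊ + 1, ?_, ?_⟩
  · gcongr
    exact div_le_div_of_nonneg_right (by linarith) hd.le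
  · have : Int.fract (y + (⌊t⌋₊ + 1 : ℕ) * d) = Int.fract y + (⌊t⌋₊ + 1 : ℕ) * d - 1 :=
      Int.fract_eq_iff.2 ⟨by linarith, by linarith, ⌊y⌋ + 1, by push_cast [Int.fract]; ring⟩
    rw [this]
    constructor <;> linarith

theorem Irrational.exists_int_fract_mul_mem_Ioo {θ : ℝ} (hθ : Irrational θ) {ε : ℝ}
    (hε : 0 < ε) : ∃ q : ℤ, Int.fract (q * θ) ∈ Set.Ioo 0 ε := by
  obtain ⟨N, hN⟩ := exists_nat_gt ε⁻¹
  obtain ⟨k, hk, -, hdir⟩ := Real.exists_nat_abs_mul_sub_round_le θ N.succ_pos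
  set e := k * θ - round (k * θ)
  have he : e ≠ 0 := sub_ne_zero.2 ((hθ.natCast_mul hk.ne').ne_int _)
  have hεe : |e| < ε := by
    refine hdir.trans_lt ?_
    rw [div_lt_iff₀ (by positivity)]
    have := mul_lt_mul_of_pos_left hN hε
    rw [mul_inv_cancel₀ hε.ne'] at this
    push_cast
    linarith
  have hhalf : |e| ≤ 1 / 2 := abs_sub_round _
  rcases he.lt_or_gt with hneg | hpos
  · refine ⟨-k, ?_⟩
    rw [abs_of_neg hneg] at hεe hhalf
    have : Int.fract (((-k : ℤ) : ℝ) * θ) = -e :=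
      Int.fract_eq_iff.2 ⟨by linarith, by linarith, -round (k * θ), by push_cast [e]; ring⟩
    exact this ▸ ⟨by linarith, hεe⟩
  · refine ⟨k, ?_⟩
    rw [abs_of_pos hpos] at hεe hhalf
    have : Int.fract (((k : ℤ) : ℝ) * θ) = e :=
      Int.fract_eq_iff.2 ⟨hpos.le, by linarith, round (k * θ), by push_cast [e]; ring⟩
    exact this ▸ ⟨hpos, hεe⟩

theorem Irrational.exists_bound_fract_add_int_mul_mem_Ioo {θ a b : ℝ} (hθ : Irrational θ)
    (ha : 0 ≤ a) (hb : b ≤ 1) (hab : a < b) :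
    ∃ R : ℕ, ∀ x : ℝ, ∃ r : ℤ, |r| ≤ R ∧ Int.fract (x + r * θ) ∈ Set.Ioo a b := by
  obtain ⟨q, hq0, hqab⟩ := hθ.exists_int_fract_mul_mem_Ioo (sub_pos.2 hab)
  refine ⟨(⌊2 / Int.fract (q * θ)⌋₊ + 1) * q.natAbs, fun x => ?_⟩
  obtain ⟨k, hk, hmem⟩ := exists_nat_fract_add_mul_mem_Ioo ha hb hq0 hqab x
  refine ⟨k * q, ?_, ?_⟩
  · rw [abs_mul, Nat.abs_cast, Int.abs_eq_natAbs]
    exact_mod_cast Nat.mul_le_mul_right _ hk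
  · have : x + ((k * q : ℤ) : ℝ) * θ = x + k * Int.fract (q * θ) + (k * ⌊q * θ⌋ : ℤ) := by
      push_cast [Int.fract]
      ring
    rwa [this, Int.fract_add_intCast]

theorem Irrational.exists_bound_fract_add_nat_mul_mem_Ioo {θ a b : ℝ} (hθ : Irrational θ)
    (ha : 0 ≤ a) (hb : b ≤ 1) (hab : a < b) :
    ∃ R : ℕ, ∀ x : ℝ, ∃ r : ℕ, 0 < r ∧ r ≤ R ∧ Int.fract (x + r * θ) ∈ Set.Ioo a b := by
  obtain ⟨R, hR⟩ := hθ.exists_bound_fract_add_int_mul_mem_Ioo ha hb hab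
  refine ⟨2 * R + 1, fun x => ?_⟩
  obtain ⟨r, hrR, hmem⟩ := hR (x + (R + 1) * θ)
  obtain ⟨hr₁, hr₂⟩ := abs_le.1 hrR
  obtain ⟨s, hs⟩ : ∃ s : ℕ, (s : ℤ) = R + 1 + r := ⟨_, Int.toNat_of_nonneg (by omega)⟩
  refine ⟨s, by omega, by omega, ?_⟩
  have hs' : (s : ℝ) = R + 1 + r := by exact_mod_cast hs
  rwa [hs', show x + (R + 1 + r) * θ = x + (R + 1) * θ + r * θ by ring]

theorem exists_fract_nat_add_mul_mem {θ : ℝ} {s : Set ℝ} {R : ℕ}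
    (h : ∀ x : ℝ, ∃ r : ℕ, 0 < r ∧ r ≤ R ∧ Int.fract (x + r * θ) ∈ s) (k : ℕ) :
    ∃ r : ℕ, 0 < r ∧ r ≤ R ∧ Int.fract ((k + r : ℕ) * θ) ∈ s := by
  obtain ⟨r, hr0, hrR, hr⟩ := h (k * θ)
  exact ⟨r, hr0, hrR, by rwa [Nat.cast_add, add_mul]⟩

theorem Irrational.injective_fract_nat_mul {θ : ℝ} (hθ : Irrational θ) :
    Function.Injective fun j : ℕ => Int.fract (j * θ) := by
  intro j j' h
  by_contra hne
  obtain ⟨z, hz⟩ := Int.fract_eq_fract.1 h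
  have hjj' : ((j : ℤ) - j' : ℤ) ≠ 0 := sub_ne_zero.2 (by exact_mod_cast hne)
  exact (hθ.intCast_mul hjj').ne_int z (by push_cast; linarith)

theorem le_card_filter_Ioc_of_bounded_gaps {P : ℕ → Prop} [DecidablePred P] {R : ℕ}
    (hP : ∀ k, ∃ r, 0 < r ∧ r ≤ R ∧ P (k + r)) (a N : ℕ) :
    N / R ≤ ((Finset.Ioc a (a + N)).filter P).card := by
  have key : ∀ q, q ≤ ((Finset.Ioc a (a + q * R)).filter P).card := by
    intro q
    induction q with
    | zero => simp
    | succ q ih =>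
      obtain ⟨r, hr0, hrR, hPr⟩ := hP (a + q * R)
      calc q + 1 ≤ (insert (a + q * R + r) ((Finset.Ioc a (a + q * R)).filter P)).card := by
            rw [Finset.card_insert_of_notMem (by simp; omega)]
            omega
        _ ≤ _ := by
            refine Finset.card_le_card (Finset.insert_subset ?_ (Finset.filter_subset_filter _ ?_))
            · simp only [Finset.mem_filter, Finset.mem_Ioc]
              exact ⟨⟨by omega, by rw [add_mul]; omega⟩, hPr⟩
            · exact Finset.Ioc_subset_Ioc_right (by rw [add_mul]; omega)
  refine (key (N / R)).trans (Finset.card_le_card (Finset.filter_subset_filter _ ?_))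
  exact Finset.Ioc_subset_Ioc_right (by have := Nat.div_mul_le_self N R; omega)

/-- Choosing an `x i` in each gap between consecutive points of `V` gives `#V - 1` distinct
values of `F`. -/
theorem exists_card_le_card_add_one_of_separating {ι α β : Type*} [LinearOrder α]
    (x : ι → α) (F : ι → β) (V : Finset α)
    (hdense : ∀ u ∈ V, ∀ v ∈ V, u < v → ∃ i, x i ∈ Set.Ioo u v)
    (hsep : ∀ i i', ∀ v ∈ V, x i < v → v ≤ x i' → F i ≠ F i') :
    ∃ T : Finset β, V.card ≤ T.card + 1 ∧ ∀ w ∈ T, ∃ i, F i = w ∧ ∃ v ∈ V, x i < v := by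
  induction V using Finset.induction_on_max with
  | empty => exact ⟨∅, by simp, by simp⟩
  | insert a s has ih =>
    obtain ⟨T, hcard, hT⟩ :=
      ih (fun u hu v hv => hdense u (Finset.mem_insert_of_mem hu) v (Finset.mem_insert_of_mem hv))
        (fun i i' v hv => hsep i i' v (Finset.mem_insert_of_mem hv))
    rcases s.eq_empty_or_nonempty with rfl | hs
    · exact ⟨∅, by simp, by simp⟩
    obtain ⟨i, hi⟩ := hdense _ (Finset.mem_insert_of_mem (s.max'_mem hs)) a
      (Finset.mem_insert_self a s) (has _ (s.max'_mem hs))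
    have hnew : F i ∉ T := by
      intro hFi
      obtain ⟨i', hi', v, hv, hxv⟩ := hT _ hFi
      exact hsep i' i v (Finset.mem_insert_of_mem hv) hxv ((s.le_max' v hv).trans hi.1.le) hi'
    refine ⟨insert (F i) T, ?_, ?_⟩
    · rw [Finset.card_insert_of_notMem fun ha => lt_irrefl a (has a ha),
        Finset.card_insert_of_notMem hnew]
      omega
    · intro w hw
      rcases Finset.mem_insert.1 hw with rfl | hw
      · exact ⟨i, rfl, a, Finset.mem_insert_self a s, hi.2⟩
      · obtain ⟨i', hi', v, hv, hxv⟩ := hT w hw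
        exact ⟨i', hi', v, Finset.mem_insert_of_mem hv, hxv⟩

section FloorRing

variable {R : Type*} [Ring R] [LinearOrder R] [FloorRing R] [IsOrderedRing R]

theorem floor_add_sub_floor_s15 (y z : R) : ⌊y + z⌋ - ⌊y⌋ = ⌊Int.fract y + z⌋ := by
  rw [sub_eq_iff_eq_add', ← Int.floor_intCast_add, ← add_assoc, Int.floor_add_fract]

theorem floor_add_lt_floor_add_of_lt_fract_neg {x x' z : R} (h : x < Int.fract (-z))
    (h' : Int.fract (-z) ≤ x') : ⌊x + z⌋ < ⌊x' + z⌋ := by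
  have hz : Int.fract (-z) + z = ((-⌊-z⌋ : ℤ) : R) := by
    rw [Int.fract]
    push_cast
    abel
  calc ⌊x + z⌋ < -⌊-z⌋ := Int.floor_lt.2 ((add_lt_add_left h z).trans_eq hz)
    _ ≤ ⌊x' + z⌋ := Int.le_floor.2 (hz.symm.trans_le (add_le_add_left h' z))

end FloorRing

theorem isAbelianSquare_append_of_count_true {u v : List Bool} (hlen : u.length = v.length)
    (hcount : u.count true = v.count true) : IsAbelianSquare (u ++ v) := by
  refine ⟨u, v, rfl, hlen, fun c => ?_⟩
  cases c
  · have hu := List.count_true_add_count_false u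
    have hv := List.count_true_add_count_false v
    omega
  · exact hcount

def factorAt {A : Type*} (s : ℕ → A) (i L : ℕ) : List A :=
  (List.range L).map fun k => s (i + k)

section factorAt

variable {A : Type*} (s : ℕ → A)

@[simp]
theorem length_factorAt (i L : ℕ) : (factorAt s i L).length = L := by
  simp [factorAt]

theorem factorOf_factorAt (i L : ℕ) : FactorOf (factorAt s i L) s :=
  ⟨i, by rw [length_factorAt]; rfl⟩

theorem factorAt_add (i L L' : ℕ) :
    factorAt s i (L + L') = factorAt s i L ++ factorAt s (i + L) L' := by
  simp only [factorAt, List.range_add, List.map_append, List.map_map]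
  congr 2
  ext k
  simp [add_assoc]

theorem take_factorAt (i : ℕ) {j L : ℕ} (h : j ≤ L) :
    (factorAt s i L).take j = factorAt s i j := by
  simp [factorAt, ← List.map_take, List.take_range, min_eq_left h]

end factorAt

theorem one_add_sum_card_le_ncard_abelianSquare_factors {s : ℕ → Bool} {n : ℕ} (M : Finset ℕ)
    (T : ℕ → Finset (List Bool)) (hM : ∀ m ∈ M, 0 < m ∧ 2 * m ≤ n)
    (hT : ∀ m ∈ M, ∀ w ∈ T m, w.length = 2 * m ∧ FactorOf w s ∧ IsAbelianSquare w) :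
    1 + ∑ m ∈ M, (T m).card ≤
      {u : List Bool | FactorOf u s ∧ IsAbelianSquare u ∧ u.length ≤ n}.ncard := by
  have hdisj : (M : Set ℕ).PairwiseDisjoint T := by
    intro m hm m' hm' hne
    refine Finset.disjoint_left.2 fun w hw hw' => hne ?_
    have := (hT m hm w hw).1
    have := (hT m' hm' w hw').1
    omega
  have hnil : [] ∉ M.biUnion T := by
    simp only [Finset.mem_biUnion, not_exists, not_and]
    intro m hm hw
    have := (hT m hm [] hw).1
    have := (hM m hm).1
    simp only [List.length_nil] at *
    omega
  have hsub : ((insert [] (M.biUnion T) : Finset (List Bool)) : Set (List Bool)) ⊆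
      {u : List Bool | FactorOf u s ∧ IsAbelianSquare u ∧ u.length ≤ n} := by
    intro w hw
    rcases Finset.mem_insert.1 hw with rfl | hw
    · exact ⟨⟨0, rfl⟩, ⟨[], [], rfl, rfl, fun _ => rfl⟩, Nat.zero_le n⟩
    · obtain ⟨m, hm, hw⟩ := Finset.mem_biUnion.1 hw
      obtain ⟨hlen, hfac, hsq⟩ := hT m hm w hw
      exact ⟨hfac, hsq, hlen ▸ (hM m hm).2⟩
  calc 1 + ∑ m ∈ M, (T m).card = (insert [] (M.biUnion T)).card := by
        rw [Finset.card_insert_of_notMem hnil, Finset.card_biUnion hdisj, add_comm]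
    _ ≤ _ := by
      rw [← Set.ncard_coe_finset]
      exact Set.ncard_le_ncard hsub ((List.finite_length_le Bool n).subset fun u hu => hu.2.2)

section Sturmian

variable {α : ℝ} (ρ : ℝ)

theorem count_true_factorAt_sturmian (h0 : 0 < α) (h1 : α < 1) (i L : ℕ) :
    ((factorAt (sturmian α ρ) i L).count true : ℤ) = ⌊ρ + (i + L : ℕ) * α⌋ - ⌊ρ + i * α⌋ := by
  induction L with
  | zero => simp [factorAt]
  | succ L ih =>
    set y := ρ + ((i + L : ℕ) : ℝ) * α
    have hy : ρ + ((i + (L + 1) : ℕ) : ℝ) * α = y + α := by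
      simp only [y]
      push_cast
      ring
    have hstep : ⌊y + α⌋ - ⌊y⌋ = if 1 - α ≤ Int.fract y then 1 else 0 := by
      have := Int.fract_nonneg y
      have := Int.fract_lt_one y
      rw [floor_add_sub_floor_s15, Int.floor_eq_iff]
      split_ifs <;> constructor <;> push_cast <;> linarith
    rw [factorAt_add, List.count_append, Nat.cast_add, ih, hy]
    simp only [factorAt, List.range_one, List.map_cons, List.map_nil, add_zero, sturmian]
    split_ifs at hstep ⊢ <;> simp <;> omega

theorem count_true_factorAt_sturmian_eq_floor_fract (h0 : 0 < α) (h1 : α < 1) (i L : ℕ) :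
    ((factorAt (sturmian α ρ) i L).count true : ℤ) = ⌊Int.fract (ρ + i * α) + L * α⌋ := by
  rw [count_true_factorAt_sturmian ρ h0 h1, ← floor_add_sub_floor_s15]
  congr 2
  push_cast
  ring

theorem isAbelianSquare_factorAt_sturmian (h0 : 0 < α) (h1 : α < 1) {i m : ℕ}
    (h : Int.fract (ρ + i * α) + 2 * Int.fract (m * α) < 1) :
    IsAbelianSquare (factorAt (sturmian α ρ) i (2 * m)) := by
  rw [two_mul, factorAt_add]
  refine isAbelianSquare_append_of_count_true (by simp) ?_
  have hfull := count_true_factorAt_sturmian_eq_floor_fract ρ h0 h1 i (m + m)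
  rw [factorAt_add, List.count_append, Nat.cast_add] at hfull
  have hhalf := count_true_factorAt_sturmian_eq_floor_fract ρ h0 h1 i m
  have hx := Int.fract_nonneg (ρ + i * α)
  have hβ := Int.fract_nonneg (m * α)
  have hmα := Int.floor_add_fract (m * α)
  have e₁ : ⌊Int.fract (ρ + i * α) + m * α⌋ = ⌊(m : ℝ) * α⌋ :=
    Int.floor_eq_iff.2 ⟨by linarith, by linarith⟩
  have e₂ : ⌊Int.fract (ρ + i * α) + (m + m : ℕ) * α⌋ = 2 * ⌊(m : ℝ) * α⌋ :=
    Int.floor_eq_iff.2 ⟨by push_cast; linarith, by push_cast; linarith⟩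
  omega

theorem factorAt_sturmian_ne (h0 : 0 < α) (h1 : α < 1) {i i' j L : ℕ} (hjL : j ≤ L)
    (h : Int.fract (ρ + i * α) < Int.fract (j * -α))
    (h' : Int.fract (j * -α) ≤ Int.fract (ρ + i' * α)) :
    factorAt (sturmian α ρ) i L ≠ factorAt (sturmian α ρ) i' L := by
  intro heq
  have hcount := congrArg (fun w => ((w.take j).count true : ℤ)) heq
  simp only [take_factorAt _ _ hjL, count_true_factorAt_sturmian_eq_floor_fract ρ h0 h1] at hcount
  rw [mul_neg] at h h'
  exact (floor_add_lt_floor_add_of_lt_fract_neg h h').ne hcount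

theorem exists_abelianSquare_factors_of_length (hirr : Irrational α) (h0 : 0 < α) (h1 : α < 1)
    {m R : ℕ} (hm : Int.fract (m * α) < 1 / 8)
    (hR : ∀ x : ℝ, ∃ r : ℕ, 0 < r ∧ r ≤ R ∧ Int.fract (x + r * -α) ∈ Set.Ioo 0 (3 / 4)) :
    ∃ T : Finset (List Bool), 2 * m / R ≤ T.card + 1 ∧
      ∀ w ∈ T, w.length = 2 * m ∧ FactorOf w (sturmian α ρ) ∧ IsAbelianSquare w := by
  set J := (Finset.Ioc 0 (2 * m)).filter fun j : ℕ => Int.fract (j * -α) ∈ Set.Ioo 0 (3 / 4)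
  have hJ : 2 * m / R ≤ J.card := by
    simpa using le_card_filter_Ioc_of_bounded_gaps (exists_fract_nat_add_mul_mem hR) 0 (2 * m)
  set V := J.image fun j : ℕ => Int.fract (j * -α)
  have hV : V.card = J.card := Finset.card_image_of_injective _ hirr.neg.injective_fract_nat_mul
  obtain ⟨T, hcard, hT⟩ := exists_card_le_card_add_one_of_separating
    (fun i : ℕ => Int.fract (ρ + i * α)) (fun i => factorAt (sturmian α ρ) i (2 * m)) V
    (fun u hu v hv huv => by
      obtain ⟨j, -, rfl⟩ := Finset.mem_image.1 hu
      obtain ⟨j', -, rfl⟩ := Finset.mem_image.1 hv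
      obtain ⟨R', hR'⟩ := hirr.exists_bound_fract_add_nat_mul_mem_Ioo (Int.fract_nonneg _)
        (Int.fract_lt_one _).le huv
      obtain ⟨i, -, -, hi⟩ := hR' ρ
      exact ⟨i, hi⟩)
    (fun i i' v hv => by
      obtain ⟨j, hj, rfl⟩ := Finset.mem_image.1 hv
      exact factorAt_sturmian_ne ρ h0 h1 (Finset.mem_Ioc.1 (Finset.mem_filter.1 hj).1).2)
  refine ⟨T, by omega, fun w hw => ?_⟩
  obtain ⟨i, rfl, v, hv, hiv⟩ := hT w hw
  obtain ⟨j, hj, rfl⟩ := Finset.mem_image.1 hv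
  have hj34 := (Finset.mem_filter.1 hj).2.2
  exact ⟨length_factorAt _ _ _, factorOf_factorAt _ _ _,
    isAbelianSquare_factorAt_sturmian ρ h0 h1 (by linarith)⟩

theorem one_add_sq_div_le_ncard_abelianSquare_factors (hirr : Irrational α) (h0 : 0 < α)
    (h1 : α < 1) {R : ℕ}
    (hR₁ : ∀ x : ℝ, ∃ r : ℕ, 0 < r ∧ r ≤ R ∧ Int.fract (x + r * α) ∈ Set.Ioo 0 (1 / 8))
    (hR₂ : ∀ x : ℝ, ∃ r : ℕ, 0 < r ∧ r ≤ R ∧ Int.fract (x + r * -α) ∈ Set.Ioo 0 (3 / 4))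
    (n : ℕ) :
    1 + (n / (4 * R)) ^ 2 ≤
      {u : List Bool | FactorOf u (sturmian α ρ) ∧ IsAbelianSquare u ∧ u.length ≤ n}.ncard := by
  set k := n / 4
  set M := (Finset.Ioc k (k + k)).filter fun m : ℕ => Int.fract (m * α) ∈ Set.Ioo 0 (1 / 8)
  have hM : k / R ≤ M.card :=
    le_card_filter_Ioc_of_bounded_gaps (exists_fract_nat_add_mul_mem hR₁) k k
  have hT : ∀ m ∈ M, ∃ T : Finset (List Bool), k / R ≤ T.card ∧
      ∀ w ∈ T, w.length = 2 * m ∧ FactorOf w (sturmian α ρ) ∧ IsAbelianSquare w := by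
    intro m hm
    obtain ⟨hmIoc, hm8⟩ := Finset.mem_filter.1 hm
    obtain ⟨T, hTcard, hTw⟩ := exists_abelianSquare_factors_of_length ρ hirr h0 h1 hm8.2 hR₂
    refine ⟨T, ?_, hTw⟩
    have h₁ := Nat.mul_div_le_mul_div_assoc 2 k R
    have h₂ : 2 * k / R ≤ 2 * m / R :=
      Nat.div_le_div_right (by have := (Finset.mem_Ioc.1 hmIoc).1; omega)
    omega
  choose! T hTcard hTw using hT
  have hMn : ∀ m ∈ M, 0 < m ∧ 2 * m ≤ n := fun m hm => by
    have := Finset.mem_Ioc.1 (Finset.mem_filter.1 hm).1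
    omega
  calc 1 + (n / (4 * R)) ^ 2 = 1 + k / R * (k / R) := by rw [← Nat.div_div_eq_div_mul]; ring
    _ ≤ 1 + M.card * (k / R) := by gcongr
    _ ≤ 1 + ∑ m ∈ M, (T m).card := by
      gcongr
      simpa using Finset.card_nsmul_le_sum M _ _ hTcard
    _ ≤ _ := one_add_sum_card_le_ncard_abelianSquare_factors M T hMn hTw

end Sturmian

theorem sq_le_two_mul_sq_mul_one_add_sq_div (n A : ℕ) (hA : 0 < A) :
    (n : ℝ) ^ 2 ≤ 2 * A ^ 2 * (1 + ((n / A : ℕ) : ℝ) ^ 2) := by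
  have hn : (n : ℝ) ≤ A * ((n / A : ℕ) + 1) := by exact_mod_cast (Nat.lt_mul_div_succ n hA).le
  have hq : (0 : ℝ) ≤ (n / A : ℕ) := Nat.cast_nonneg _
  nlinarith [sq_nonneg (((n / A : ℕ) : ℝ) - 1), mul_le_mul hn hn (Nat.cast_nonneg n) (by positivity)]

theorem stmt15_general (α ρ : ℝ) (hirr : Irrational α) (h0 : 0 < α) (h1 : α < 1) :
    ∃ C : ℝ, 0 < C ∧ ∀ n : ℕ,
      C * (n : ℝ) ^ 2 ≤
        ({u : List Bool | FactorOf u (sturmian α ρ) ∧ IsAbelianSquare u ∧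
          u.length ≤ n}.ncard : ℝ) := by
  obtain ⟨R₁, hR₁⟩ := hirr.exists_bound_fract_add_nat_mul_mem_Ioo le_rfl (b := 1 / 8)
    (by norm_num) (by norm_num)
  obtain ⟨R₂, hR₂⟩ := hirr.neg.exists_bound_fract_add_nat_mul_mem_Ioo le_rfl (b := 3 / 4)
    (by norm_num) (by norm_num)
  set R := max R₁ R₂
  have hR : 0 < R := by
    obtain ⟨r, hr0, hrR, -⟩ := hR₁ 0
    omega
  refine ⟨1 / (2 * (4 * R) ^ 2), by positivity, fun n => ?_⟩
  have hcount := one_add_sq_div_le_ncard_abelianSquare_factors ρ hirr h0 h1 (R := R)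
    (fun x => (hR₁ x).imp fun _ h => ⟨h.1, h.2.1.trans (le_max_left _ _), h.2.2⟩)
    (fun x => (hR₂ x).imp fun _ h => ⟨h.1, h.2.1.trans (le_max_right _ _), h.2.2⟩) n
  calc 1 / (2 * (4 * R) ^ 2) * (n : ℝ) ^ 2 ≤ 1 + ((n / (4 * R) : ℕ) : ℝ) ^ 2 := by
        rw [one_div_mul_eq_div, div_le_iff₀ (by positivity), mul_comm]
        exact_mod_cast sq_le_two_mul_sq_mul_one_add_sq_div n (4 * R) (by omega)
    _ ≤ _ := by exact_mod_cast hcount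

/-- If `α ∈ (0,1)` is irrational with bounded partial quotients, then there is
`C > 0` such that for every `n`, the Sturmian word of angle `α` has at least
`C·n²` distinct abelian-square factors of length at most `n`. -/
theorem stmt15 (α ρ : ℝ) (hirr : Irrational α) (h0 : 0 < α) (h1 : α < 1)
    (hbdd : BddPartialQuotients α) :
    ∃ C : ℝ, 0 < C ∧ ∀ n : ℕ,
      C * (n : ℝ) ^ 2 ≤
        ({u : List Bool | FactorOf u (sturmian α ρ) ∧ IsAbelianSquare u ∧
          u.length ≤ n}.ncard : ℝ) :=
  stmt15_general α ρ hirr h0 h1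
end
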